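/- Let p, q be coprime integers with 0 < p < q. (i) The permutation σ_{q−1} is a single q-cycle: for every s ∈ {1, …, q} the least integer n ≥ 1 with σ_{q−1}^n(s) = s equals q. (ii) For the permutation σ_q (corresponding to a circle enclosing all q branch points, equivalently the branch point at infinity), the least integer n ≥ 1 with σ_q^n(s) = s equals q − p if 1 ≤ s ≤ q − p, and equals p if q − p + 1 ≤ s ≤ q. -/

import Mathlib

/-- a mod~ b : equals a mod b if this is nonzero, and b otherwise. -/
def amod (a b : ℕ) : ℕ := if a % b = 0 then b else a % b

/-- The transposition τ_j of {1,…,q} exchanging j and (j + q - p) mod~ q. -/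
def tau (q p j : ℕ) : Equiv.Perm ℕ := Equiv.swap j (amod (j + q - p) q)

/-- The monodromy permutation σ_b = τ_b ∘ ⋯ ∘ τ_1 (τ_1 applied first, σ_0 = id). -/
def sigma (q p : ℕ) : ℕ → Equiv.Perm ℕ
  | 0 => 1
  | b + 1 => tau q p (b + 1) * sigma q p b

/-!
Track each element of `{1, …, q}` by a lifted position `x ∈ ℕ`, its actual position being
`amod x q`. After `τ_1, …, τ_b` an element `s ≤ q - p` sits at the lift `x ≡ s (mod q - p)` in
`(b, b + q - p]`, and an element `s > q - p` at the lift `x ≡ s (mod p)` in `(b + q - p, b + q]`: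
`τ_{b+1}` only moves the lowest lift of each window, up by the window's length. Hence `σ_q` acts
on the blocks `(0, q - p]` and `(q - p, q]` as `s ↦ s - q` modulo `q - p`, resp. `p`, which is a
single cycle on each block because `q` is coprime to both. Finally `σ_{q-1} = (q, q - p) * σ_q`,
and a transposition of two points lying in disjoint cycles merges these into one cycle, here of
length `(q - p) + p = q`.
-/

open Function Set

theorem eq_of_natCast_eq_of_mem_Ioc {c lo x y : ℕ} (hx : x ∈ Ioc lo (lo + c))
    (hy : y ∈ Ioc lo (lo + c)) (h : (x : ZMod c) = y) : x = y := by
  obtain ⟨hx1, hx2⟩ := hx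
  obtain ⟨hy1, hy2⟩ := hy
  rw [ZMod.natCast_eq_natCast_iff] at h
  rcases le_total x y with hxy | hyx
  · have := Nat.eq_zero_of_dvd_of_lt ((Nat.modEq_iff_dvd' hxy).1 h) (by omega)
    omega
  · have := Nat.eq_zero_of_dvd_of_lt ((Nat.modEq_iff_dvd' hyx).1 h.symm) (by omega)
    omega

section Amod

theorem natCast_amod (a n : ℕ) : ((amod a n : ℕ) : ZMod n) = a := by
  unfold amod
  split_ifs with h
  · rw [ZMod.natCast_self, eq_comm, ZMod.natCast_eq_zero_iff]
    exact Nat.dvd_of_mod_eq_zero h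
  · exact ZMod.natCast_mod a n

theorem amod_eq_amod_iff {a b n : ℕ} : amod a n = amod b n ↔ (a : ZMod n) = b := by
  refine ⟨fun h => by rw [← natCast_amod a, ← natCast_amod b, h], fun h => ?_⟩
  rw [ZMod.natCast_eq_natCast_iff'] at h
  simp only [amod, h]

theorem amod_of_mem_Ioc {a n : ℕ} (h : a ∈ Ioc 0 n) : amod a n = a := by
  obtain ⟨h1, h2⟩ := h
  rcases h2.eq_or_lt with rfl | h2
  · simp [amod]
  · simp [amod, Nat.mod_eq_of_lt h2, h1.ne']

theorem amod_add_self (a n : ℕ) : amod (a + n) n = amod a n := by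
  simp [amod_eq_amod_iff]

theorem amod_ne_amod {a b n : ℕ} (h1 : b < a) (h2 : a < b + n) : amod a n ≠ amod b n := by
  rw [Ne, amod_eq_amod_iff, ← add_zero (b : ZMod n), ← ZMod.natCast_self n, ← Nat.cast_add]
  intro h
  have := eq_of_natCast_eq_of_mem_Ioc (lo := b) ⟨h1, h2.le⟩ ⟨by omega, le_rfl⟩ h
  omega

end Amod

theorem tau_eq_swap {q p : ℕ} (hpq : p ≤ q) (j : ℕ) :
    tau q p j = Equiv.swap j (amod (j + (q - p)) q) := by
  rw [tau, Nat.add_sub_assoc hpq]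

def IsBlock (q p lo c : ℕ) : Prop := lo = 0 ∧ c = q - p ∨ lo = q - p ∧ c = p

section Block

variable {q p lo c : ℕ}

theorem IsBlock.add_le (hb : IsBlock q p lo c) (hpq : p ≤ q) : lo + c ≤ q := by
  rcases hb with ⟨rfl, rfl⟩ | ⟨rfl, rfl⟩ <;> omega

theorem tau_apply_amod_add (hpq : p ≤ q) (hb : IsBlock q p lo c) {j : ℕ} (hj : j ∈ Ioc 0 q) :
    tau q p j (amod (j + lo) q) = amod (j + lo + c) q := by
  rw [tau_eq_swap hpq]
  rcases hb with ⟨rfl, rfl⟩ | ⟨rfl, rfl⟩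
  · rw [add_zero, amod_of_mem_Ioc hj, Equiv.swap_apply_left]
  · rw [Equiv.swap_apply_right, add_assoc, Nat.sub_add_cancel hpq, amod_add_self,
      amod_of_mem_Ioc hj]

theorem tau_apply_amod_of_mem_Ioc (hpq : p ≤ q) (hb : IsBlock q p lo c) {j x : ℕ}
    (hj : j ∈ Ioc 0 q) (hx : x ∈ Ioc (j + lo) (j - 1 + lo + c)) :
    tau q p j (amod x q) = amod x q := by
  obtain ⟨hx1, hx2⟩ := hx
  have ⟨hj1, hj2⟩ := hj
  have hlc := hb.add_le hpq
  rw [tau_eq_swap hpq]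
  refine Equiv.swap_apply_of_ne_of_ne ?_ ?_
  · rw [← amod_of_mem_Ioc hj]
    exact amod_ne_amod (a := x) (b := j) (by omega) (by omega)
  · rcases hb with ⟨hlo, hc⟩ | ⟨hlo, hc⟩
    · exact Ne.symm (amod_ne_amod (a := j + (q - p)) (b := x) (by omega) (by omega))
    · exact amod_ne_amod (a := x) (b := j + (q - p)) (by omega) (by omega)

theorem sigma_apply_eq_amod (hpq : p ≤ q) (hb : IsBlock q p lo c) {s : ℕ}
    (hs : s ∈ Ioc lo (lo + c)) :
    ∀ b ≤ q, ∃ x ∈ Ioc (b + lo) (b + lo + c), (x : ZMod c) = s ∧ sigma q p b s = amod x q := by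
  have hlc := hb.add_le hpq
  obtain ⟨hs1, hs2⟩ := hs
  intro b hbq
  induction b with
  | zero =>
    refine ⟨s, by simp [hs1, hs2], rfl, ?_⟩
    rw [amod_of_mem_Ioc ⟨by omega, by omega⟩]
    rfl
  | succ b ih =>
    obtain ⟨x, ⟨hx1, hx2⟩, hxs, hσ⟩ := ih (by omega)
    rw [sigma, Equiv.Perm.mul_apply, hσ]
    by_cases hxb : x = b + 1 + lo
    · refine ⟨x + c, ⟨by omega, by omega⟩, by simp [hxs], ?_⟩
      rw [hxb, tau_apply_amod_add hpq hb ⟨by omega, hbq⟩]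
    · refine ⟨x, ⟨by omega, by omega⟩, hxs, ?_⟩
      rw [tau_apply_amod_of_mem_Ioc hpq hb ⟨by omega, hbq⟩ ⟨by omega, by omega⟩]

end Block

def IsRotationOn (f : ℕ → ℕ) (lo c d : ℕ) : Prop :=
  ∀ s ∈ Ioc lo (lo + c), f s ∈ Ioc lo (lo + c) ∧ (f s : ZMod c) + d = s

namespace IsRotationOn

variable {f : ℕ → ℕ} {lo c d : ℕ}

theorem iterate (hf : IsRotationOn f lo c d) {s : ℕ} (hs : s ∈ Ioc lo (lo + c)) (n : ℕ) :
    f^[n] s ∈ Ioc lo (lo + c) ∧ (f^[n] s : ZMod c) + n * d = s := by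
  induction n with
  | zero => simpa using hs
  | succ n ih =>
    obtain ⟨hmem, hcast⟩ := hf _ ih.1
    rw [iterate_succ_apply']
    refine ⟨hmem, ?_⟩
    push_cast
    linear_combination hcast + ih.2

theorem isPeriodicPt_iff (hf : IsRotationOn f lo c d) (hcd : c.Coprime d) {s : ℕ}
    (hs : s ∈ Ioc lo (lo + c)) (n : ℕ) : IsPeriodicPt f n s ↔ c ∣ n := by
  obtain ⟨hmem, hcast⟩ := hf.iterate hs n
  have hd : IsUnit (d : ZMod c) := (ZMod.unitOfCoprime d hcd.symm).isUnit
  rw [← ZMod.natCast_eq_zero_iff, ← hd.mul_left_eq_zero]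
  constructor
  · intro h
    rw [IsPeriodicPt, IsFixedPt] at h
    rw [h] at hcast
    linear_combination hcast
  · intro h
    refine eq_of_natCast_eq_of_mem_Ioc hmem hs ?_
    linear_combination hcast - h

theorem minimalPeriod_eq (hf : IsRotationOn f lo c d) (hcd : c.Coprime d) {s : ℕ}
    (hs : s ∈ Ioc lo (lo + c)) : minimalPeriod f s = c :=
  Nat.dvd_right_iff_eq.1 fun n => by
    rw [← isPeriodicPt_iff_minimalPeriod_dvd, hf.isPeriodicPt_iff hcd hs]

theorem exists_iterate_eq (hf : IsRotationOn f lo c d) (hcd : c.Coprime d) {s t : ℕ}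
    (hs : s ∈ Ioc lo (lo + c)) (ht : t ∈ Ioc lo (lo + c)) : ∃ n, f^[n] s = t := by
  have : NeZero c := ⟨by obtain ⟨h1, h2⟩ := hs; omega⟩
  set n := (((s : ZMod c) - t) * (d : ZMod c)⁻¹).val
  obtain ⟨hmem, hcast⟩ := hf.iterate hs n
  refine ⟨n, eq_of_natCast_eq_of_mem_Ioc hmem ht ?_⟩
  have hn : (n : ZMod c) * d = s - t := by
    rw [ZMod.natCast_zmod_val, mul_assoc, mul_comm _ (d : ZMod c),
      ZMod.coe_mul_inv_eq_one d hcd.symm, mul_one]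
  linear_combination hcast - hn

end IsRotationOn

section SwapMul

variable {α : Type*} [DecidableEq α] {π : Equiv.Perm α} {a b : α}

theorem iterate_swap_mul_of_lt_minimalPeriod (hab : ∀ n, π^[n] a ≠ b) :
    ∀ k < minimalPeriod π a, (⇑(Equiv.swap a b * π))^[k] a = π^[k] a := by
  intro k hk
  induction k with
  | zero => rfl
  | succ k ih =>
    rw [iterate_succ_apply', ih (by omega), Equiv.Perm.mul_apply, ← iterate_succ_apply' π]
    exact Equiv.swap_apply_of_ne_of_ne
      (not_isPeriodicPt_of_pos_of_lt_minimalPeriod k.succ_ne_zero hk) (hab _)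

theorem iterate_swap_mul_minimalPeriod (ha : a ∈ periodicPts π) (hab : ∀ n, π^[n] a ≠ b) :
    (⇑(Equiv.swap a b * π))^[minimalPeriod π a] a = b := by
  obtain ⟨k, hk⟩ := Nat.exists_eq_add_one.2 (minimalPeriod_pos_of_mem_periodicPts ha)
  rw [hk, iterate_succ_apply', iterate_swap_mul_of_lt_minimalPeriod hab k (by omega),
    Equiv.Perm.mul_apply, ← iterate_succ_apply' π, Nat.succ_eq_add_one, ← hk,
    iterate_minimalPeriod, Equiv.swap_apply_left]

theorem minimalPeriod_swap_mul (ha : a ∈ periodicPts π) (hb : b ∈ periodicPts π)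
    (hab : ∀ n, π^[n] a ≠ b) (hba : ∀ n, π^[n] b ≠ a) :
    minimalPeriod (Equiv.swap a b * π) a = minimalPeriod π a + minimalPeriod π b := by
  set P := minimalPeriod π a
  set Q := minimalPeriod π b
  have hP := minimalPeriod_pos_of_mem_periodicPts ha
  have hQ := minimalPeriod_pos_of_mem_periodicPts hb
  have hab' : (⇑(Equiv.swap a b * π))^[P] a = b := iterate_swap_mul_minimalPeriod ha hab
  have hba' : (⇑(Equiv.swap a b * π))^[Q] b = a := by
    rw [Equiv.swap_comm]
    exact iterate_swap_mul_minimalPeriod hb hba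
  have hper : IsPeriodicPt (Equiv.swap a b * π) (P + Q) a := by
    rw [IsPeriodicPt, IsFixedPt, add_comm, iterate_add_apply, hab', hba']
  have hret : ∀ k, 0 < k → k < P + Q → (⇑(Equiv.swap a b * π))^[k] a ≠ a := by
    intro k hk0 hk
    by_cases hkP : k < P
    · rw [iterate_swap_mul_of_lt_minimalPeriod hab k hkP]
      exact not_isPeriodicPt_of_pos_of_lt_minimalPeriod hk0.ne' hkP
    · rw [show k = (k - P) + P by omega, iterate_add_apply, hab', Equiv.swap_comm,
        iterate_swap_mul_of_lt_minimalPeriod hba _ (by omega)]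
      exact hba _
  refine le_antisymm (hper.minimalPeriod_le (by omega)) (not_lt.1 fun h => ?_)
  exact hret _ (hper.minimalPeriod_pos (by omega)) h iterate_minimalPeriod

theorem minimalPeriod_swap_mul_of_iterate_eq (ha : a ∈ periodicPts π)
    (hb : b ∈ periodicPts π) (hab : ∀ n, π^[n] a ≠ b) (hba : ∀ n, π^[n] b ≠ a) {x : α} {n : ℕ}
    (hx : π^[n] a = x) :
    minimalPeriod (Equiv.swap a b * π) x = minimalPeriod π a + minimalPeriod π b := by
  have hρ := minimalPeriod_swap_mul ha hb hab hba
  have hρa : a ∈ periodicPts (Equiv.swap a b * π) := by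
    rw [← minimalPeriod_pos_iff_mem_periodicPts, hρ]
    exact Nat.add_pos_left (minimalPeriod_pos_of_mem_periodicPts ha) _
  rw [← hx, ← iterate_mod_minimalPeriod_eq, ← iterate_swap_mul_of_lt_minimalPeriod hab _
    (Nat.mod_lt _ (minimalPeriod_pos_of_mem_periodicPts ha)), minimalPeriod_apply_iterate hρa, hρ]

end SwapMul

theorem isLeast_zpow_apply_eq_self {α : Type*} {π : Equiv.Perm α} {x : α} {N : ℕ} (hN : 0 < N)
    (h : minimalPeriod π x = N) : IsLeast {n : ℤ | 1 ≤ n ∧ (π ^ n) x = x} N := by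
  have key (n : ℤ) : (π ^ n) x = x ↔ (N : ℤ) ∣ n := by
    rw [← h]
    exact MulAction.zpow_smul_eq_iff_minimalPeriod_dvd (a := π) (b := x)
  exact ⟨⟨by omega, (key N).2 dvd_rfl⟩,
    fun n ⟨hn1, hn2⟩ => Int.le_of_dvd (by omega) ((key n).1 hn2)⟩

section Sigma

variable {q p : ℕ}

theorem isRotationOn_sigma_self {lo c : ℕ} (hpq : p ≤ q) (hb : IsBlock q p lo c) :
    IsRotationOn (sigma q p q) lo c q := by
  intro s hs
  have hlc := hb.add_le hpq
  obtain ⟨x, ⟨hx1, hx2⟩, hxs, hσ⟩ := sigma_apply_eq_amod hpq hb hs q le_rfl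
  have hx : x = x - q + q := by omega
  rw [hx, amod_add_self, amod_of_mem_Ioc ⟨by omega, by omega⟩] at hσ
  rw [hσ, ← hxs, ← Nat.cast_add, ← hx]
  exact ⟨⟨by omega, by omega⟩, rfl⟩

theorem minimalPeriod_sigma_self {lo c : ℕ} (hpq : p ≤ q) (hb : IsBlock q p lo c)
    (hcq : c.Coprime q) {s : ℕ} (hs : s ∈ Ioc lo (lo + c)) :
    minimalPeriod (sigma q p q) s = c :=
  (isRotationOn_sigma_self hpq hb).minimalPeriod_eq hcq hs

theorem sigma_pred_eq (hpq : p < q) :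
    sigma q p (q - 1) = Equiv.swap q (q - p) * sigma q p q := by
  obtain ⟨k, rfl⟩ : ∃ k, q = k + 1 := ⟨q - 1, by omega⟩
  rw [sigma, tau_eq_swap hpq.le, Nat.add_sub_cancel, ← mul_assoc, add_comm (k + 1),
    amod_add_self, amod_of_mem_Ioc ⟨by omega, by omega⟩, Equiv.swap_mul_self, one_mul]

theorem minimalPeriod_sigma_pred (hcop : p.Coprime q) (hp : 0 < p) (hpq : p < q) {s : ℕ}
    (hs : s ∈ Ioc 0 q) : minimalPeriod (sigma q p (q - 1)) s = q := by
  have hlow : IsBlock q p 0 (q - p) := Or.inl ⟨rfl, rfl⟩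
  have hhigh : IsBlock q p (q - p) p := Or.inr ⟨rfl, rfl⟩
  have hcop' : (q - p).Coprime q := (Nat.coprime_self_sub_left hpq.le).2 hcop
  have hm : q - p ∈ Ioc 0 (0 + (q - p)) := ⟨by omega, by omega⟩
  have hq : q ∈ Ioc (q - p) (q - p + p) := ⟨by omega, by omega⟩
  have hrot_low := isRotationOn_sigma_self hpq.le hlow
  have hrot_high := isRotationOn_sigma_self hpq.le hhigh
  have hQ := hrot_low.minimalPeriod_eq hcop' hm
  have hP := hrot_high.minimalPeriod_eq hcop hq
  have hqm (n : ℕ) : (sigma q p q)^[n] q ≠ q - p := fun h => by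
    have := (hrot_high.iterate hq n).1.1
    omega
  have hmq (n : ℕ) : (sigma q p q)^[n] (q - p) ≠ q := fun h => by
    have := (hrot_low.iterate hm n).1.2
    omega
  have hqper : q ∈ periodicPts (sigma q p q) :=
    minimalPeriod_pos_iff_mem_periodicPts.1 (by omega)
  have hmper : q - p ∈ periodicPts (sigma q p q) :=
    minimalPeriod_pos_iff_mem_periodicPts.1 (by omega)
  rw [sigma_pred_eq hpq]
  obtain ⟨hs1, hs2⟩ := hs
  by_cases hsm : s ≤ q - p
  · obtain ⟨n, hn⟩ := hrot_low.exists_iterate_eq hcop' hm (t := s) ⟨hs1, by omega⟩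
    rw [Equiv.swap_comm, minimalPeriod_swap_mul_of_iterate_eq hmper hqper hmq hqm hn, hP, hQ]
    omega
  · obtain ⟨n, hn⟩ := hrot_high.exists_iterate_eq hcop hq (t := s) ⟨by omega, by omega⟩
    rw [minimalPeriod_swap_mul_of_iterate_eq hqper hmper hqm hmq hn, hP, hQ]
    omega

end Sigma

/-- (i) σ_{q-1} is a single q-cycle: every s in {1,…,q} has period q.
(ii) under σ_q, s has period q - p if 1 ≤ s ≤ q - p and period p if
q - p + 1 ≤ s ≤ q. -/
theorem period_extreme_cases (p q : ℕ) (hcop : Nat.Coprime p q) (hp : 0 < p)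
    (hpq : p < q) :
    (∀ s : ℕ, 1 ≤ s → s ≤ q →
      IsLeast {n : ℤ | 1 ≤ n ∧ ((sigma q p (q - 1)) ^ n) s = s} (q : ℤ)) ∧
    (∀ s : ℕ, 1 ≤ s → s ≤ q - p →
      IsLeast {n : ℤ | 1 ≤ n ∧ ((sigma q p q) ^ n) s = s} ((q - p : ℕ) : ℤ)) ∧
    (∀ s : ℕ, q - p + 1 ≤ s → s ≤ q →
      IsLeast {n : ℤ | 1 ≤ n ∧ ((sigma q p q) ^ n) s = s} (p : ℤ)) := by
  refine ⟨fun s hs1 hs2 => ?_, fun s hs1 hs2 => ?_, fun s hs1 hs2 => ?_⟩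
  · exact isLeast_zpow_apply_eq_self (by omega)
      (minimalPeriod_sigma_pred hcop hp hpq ⟨hs1, hs2⟩)
  · exact isLeast_zpow_apply_eq_self (by omega)
      (minimalPeriod_sigma_self hpq.le (Or.inl ⟨rfl, rfl⟩)
        ((Nat.coprime_self_sub_left hpq.le).2 hcop) ⟨hs1, by omega⟩)
  · exact isLeast_zpow_apply_eq_self hp
      (minimalPeriod_sigma_self hpq.le (Or.inr ⟨rfl, rfl⟩) hcop ⟨by omega, by omega⟩)
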